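/- (Standardization commutes with inversion) For any ordered restricted (X,Y)-biword w, the inversion of its •-standardization equals the •-standardization of its inversion: (w•)^inv = (w^inv)•. -/

import Mathlib

namespace SuperRSK

variable {X Y : Type*}

/-- The super order `≺` on a superalphabet: `a ≺ b` iff (`a` odd, `b` even), or
(both even and `a < b`), or (both odd and `a > b`). Odd means parity `true`. -/
def SuperPrec [LinearOrder X] (par : X → Bool) (a b : X) : Prop :=
  (par a = true ∧ par b = false) ∨
  (par a = false ∧ par b = false ∧ a < b) ∨
  (par a = true ∧ par b = true ∧ b < a)

/-- The `δ`-coordinate of a node: row if `δ = false`, column if `δ = true`. -/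
def coord (δ : Bool) (u : ℕ × ℕ) : ℕ := if δ then u.2 else u.1

/-- A tableau is a function `ℕ × ℕ → WithTop X`, equal to `⊤` outside its diagram.
Semistandard: the support is a Young diagram and entries are non-decreasing
(both encoded by monotonicity into `WithTop X`), equal entries in a row are even,
and equal entries in a column are odd. -/
def IsSStd [LinearOrder X] (par : X → Bool) (T : ℕ × ℕ → WithTop X) : Prop :=
  (∀ u v : ℕ × ℕ, u.1 ≤ v.1 → u.2 ≤ v.2 → T u ≤ T v) ∧
  (∀ u v : ℕ × ℕ, ∀ a : X, u.1 = v.1 → u.2 < v.2 → T u = (a : WithTop X) →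
    T v = (a : WithTop X) → par a = false) ∧
  (∀ u v : ℕ × ℕ, ∀ a : X, u.2 = v.2 → u.1 < v.1 → T u = (a : WithTop X) →
    T v = (a : WithTop X) → par a = true)

/-- A standard tableau: semistandard with no repeated letters. -/
def IsStd [LinearOrder X] (par : X → Bool) (T : ℕ × ℕ → WithTop X) : Prop :=
  IsSStd par T ∧
  ∀ u v : ℕ × ℕ, ∀ a : X, T u = (a : WithTop X) → T v = (a : WithTop X) → u = v

/-- The comparison used in `ε`-insertion: strict for `ε = false`, weak for `ε = true`. -/
def cmpIns [LinearOrder X] (ε : Bool) (x : X) (v : WithTop X) : Prop :=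
  if ε then (x : WithTop X) ≤ v else (x : WithTop X) < v

/-- The comparison used in `ε`-extraction: strict for `ε = false`, weak for `ε = true`. -/
def cmpExt [LinearOrder X] (ε : Bool) (y : X) (v : WithTop X) : Prop :=
  if ε then v ≤ (y : WithTop X) else v < (y : WithTop X)

/-- `BumpSeq ε par T x b xs m` says `b 0, …, b (m-1)` is the bumped node sequence and
`xs 0, …, xs (m-1)` the bumped letter sequence for the `ε`-insertion of `x` into `T`:
`xs 0 = x`; at step `j` the current letter `xs j` is placed at the smallest node `b j`
of the `i`-th row (if `ε + parity (xs j) = 0`) or column (if `= 1`) satisfying the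
`ε`-comparison, where `i = 0` at the start and afterwards is one more than the
corresponding coordinate of the previous bumped node; the bumped letter becomes the
next inserted letter, until an empty node (`⊤`) is reached. -/
def BumpSeq [LinearOrder X] (ε : Bool) (par : X → Bool) (T : ℕ × ℕ → WithTop X)
    (x : X) (b : ℕ → ℕ × ℕ) (xs : ℕ → X) (m : ℕ) : Prop :=
  0 < m ∧ xs 0 = x ∧
  (∀ j, j + 1 < m → T (b j) = (xs (j + 1) : WithTop X)) ∧
  T (b (m - 1)) = ⊤ ∧
  ∀ j, j < m →
    (coord (Bool.xor ε (par (xs j))) (b j) =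
      (if j = 0 then 0 else coord (Bool.xor ε (par (xs j))) (b (j - 1)) + 1)) ∧
    cmpIns ε (xs j) (T (b j)) ∧
    ∀ v : ℕ × ℕ,
      coord (Bool.xor ε (par (xs j))) v = coord (Bool.xor ε (par (xs j))) (b j) →
      cmpIns ε (xs j) (T v) →
      coord (!(Bool.xor ε (par (xs j)))) (b j) ≤ coord (!(Bool.xor ε (par (xs j)))) v

/-- `InsResult T b xs m R` says `R` is the tableau obtained from `T` by the insertion
with bumped nodes `b` and bumped letters `xs`: `R (b k) = xs k` and `R` agrees with `T`
elsewhere. -/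
def InsResult [LinearOrder X] (T : ℕ × ℕ → WithTop X) (b : ℕ → ℕ × ℕ) (xs : ℕ → X)
    (m : ℕ) (R : ℕ × ℕ → WithTop X) : Prop :=
  (∀ k, k < m → R (b k) = (xs k : WithTop X)) ∧
  ∀ u : ℕ × ℕ, (∀ k, k < m → u ≠ b k) → R u = T u

/-- `ExtractSeq ε par T u c ys m` says `c 0, …, c (m-1)` is the unbumped node sequence
and `ys 0, …, ys (m-1)` the unbumped letter sequence for the `ε`-extraction at `u`:
`c 0 = u`, `ys 0 = T u`; at each step `c (j+1)` is the greatest node, in the row/column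
(according to `ε` plus the parity of `ys j`) preceding that of `c j`, whose entry is
`ε`-below `ys j`; the process stops upon reaching the first row/column. -/
def ExtractSeq [LinearOrder X] (ε : Bool) (par : X → Bool) (T : ℕ × ℕ → WithTop X)
    (u : ℕ × ℕ) (c : ℕ → ℕ × ℕ) (ys : ℕ → X) (m : ℕ) : Prop :=
  0 < m ∧ c 0 = u ∧ T u = (ys 0 : WithTop X) ∧
  (∀ j, j + 1 < m →
    0 < coord (Bool.xor ε (par (ys j))) (c j) ∧
    coord (Bool.xor ε (par (ys j))) (c (j + 1)) + 1 =
      coord (Bool.xor ε (par (ys j))) (c j) ∧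
    T (c (j + 1)) = (ys (j + 1) : WithTop X) ∧
    cmpExt ε (ys j) (T (c (j + 1))) ∧
    ∀ v : ℕ × ℕ,
      coord (Bool.xor ε (par (ys j))) v + 1 = coord (Bool.xor ε (par (ys j))) (c j) →
      cmpExt ε (ys j) (T v) →
      coord (!(Bool.xor ε (par (ys j)))) v ≤ coord (!(Bool.xor ε (par (ys j)))) (c (j + 1))) ∧
  coord (Bool.xor ε (par (ys (m - 1)))) (c (m - 1)) = 0

/-- `ExtResult T c ys m R` says `R` is the tableau obtained from `T` by the extraction
with unbumped nodes `c` and letters `ys`: each `c k` (`k ≥ 1`) receives `ys (k-1)`, the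
initial node `c 0` is emptied, and `R` agrees with `T` elsewhere. -/
def ExtResult [LinearOrder X] (T : ℕ × ℕ → WithTop X) (c : ℕ → ℕ × ℕ) (ys : ℕ → X)
    (m : ℕ) (R : ℕ × ℕ → WithTop X) : Prop :=
  (∀ k, 0 < k → k < m → R (c k) = (ys (k - 1) : WithTop X)) ∧
  (∀ v : ℕ × ℕ, (∀ k, k < m → v ≠ c k) → R v = T v) ∧
  ((∀ k, 0 < k → k < m → c 0 ≠ c k) → R (c 0) = ⊤)

/-- The (non-strict) order `⊴` on biletters: `(x₁,y₁) ⊴ (x₂,y₂)` iff `y₁ < y₂`, or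
`y₁ = y₂` and `x₁ ≼ x₂` in the super order on `X`. -/
def BiLE [LinearOrder X] [LinearOrder Y] (parX : X → Bool) (p q : X × Y) : Prop :=
  p.2 < q.2 ∨ (p.2 = q.2 ∧ (SuperPrec parX p.1 q.1 ∨ p.1 = q.1))

/-- A biword is restricted if no mixed-parity biletter occurs more than once. -/
def Restricted [LinearOrder X] [LinearOrder Y] (parX : X → Bool) (parY : Y → Bool)
    (w : List (X × Y)) : Prop :=
  ∀ p : X × Y, Bool.xor (parX p.1) (parY p.2) = true →
    Nat.card {i : Fin w.length // w.get i = p} ≤ 1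

/-- The super RSK relation: `SRSKRel parX parY w P Q` holds iff starting from the empty
tableau and successively `ε`-inserting `x` with `ε = parity y` for each biletter
`(x, y)` of `w` (in order), recording `y` at each added node, produces insertion
tableau `P` and recording tableau `Q`. -/
inductive SRSKRel [LinearOrder X] [LinearOrder Y] (parX : X → Bool) (parY : Y → Bool) :
    List (X × Y) → ((ℕ × ℕ) → WithTop X) → ((ℕ × ℕ) → WithTop Y) → Prop
  | nil : SRSKRel parX parY [] (fun _ => ⊤) (fun _ => ⊤)
  | snoc {w P Q x y b xs m P'} :
      SRSKRel parX parY w P Q →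
      BumpSeq (parY y) parX P x b xs m →
      InsResult P b xs m P' →
      SRSKRel parX parY (w ++ [(x, y)]) P'
        (fun u => if u = b (m - 1) then (y : WithTop Y) else Q u)

/-- `w'` is the inversion of `w`: the unique ordered biword whose biletters are
those of `w` with entries swapped. -/
def IsInversion [LinearOrder X] [LinearOrder Y] (parY : Y → Bool)
    (w : List (X × Y)) (w' : List (Y × X)) : Prop :=
  List.Pairwise (BiLE parY) w' ∧ (↑w' : Multiset (Y × X)) = ↑(w.map Prod.swap)

/-- Parity on the standardizing alphabet `X ×ₗ ℕ`. -/
def bpar (par : X → Bool) (p : X ×ₗ ℕ) : Bool := par (ofLex p).1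

/-- Number of biletters of `w` equal to `(x, y)`. -/
noncomputable def countPair (w : List (X × Y)) (x : X) (y : Y) : ℕ :=
  Nat.card {i : Fin w.length // w.get i = (x, y)}

/-- Number of biletters of `w` with left entry `x` and right entry `≺ y`
(this is `ℓ_{i,1} + ⋯ + ℓ_{i,j-1}` in the definition of `•`-standardization). -/
noncomputable def lcount [LinearOrder Y] (parY : Y → Bool) (w : List (X × Y)) (x : X) (y : Y) : ℕ :=
  Nat.card {i : Fin w.length // (w.get i).1 = x ∧ SuperPrec parY (w.get i).2 y}

/-- Number of biletters of `w` with right entry `y` and left entry `≺ x`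
(this is `ℓ_{1,j} + ⋯ + ℓ_{i-1,j}`). -/
noncomputable def rcount [LinearOrder X] (parX : X → Bool) (w : List (X × Y)) (x : X) (y : Y) : ℕ :=
  Nat.card {i : Fin w.length // (w.get i).2 = y ∧ SuperPrec parX (w.get i).1 x}

/-- `w'` is the `•`-standardization of `w`: the ordered biword over the standardizing
alphabets whose biletters are `(x^(A+m), y^(B+m))` for `m ∈ [1, ℓ]` when `y` is even,
and `(x^(A+m), y^(B+ℓ+1−m))` when `y` is odd, where `ℓ` is the multiplicity of `(x,y)`
in `w`, `A = lcount` and `B = rcount`. -/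
def IsBulletBiword [LinearOrder X] [LinearOrder Y] (parX : X → Bool) (parY : Y → Bool)
    (w : List (X × Y)) (w' : List ((X ×ₗ ℕ) × (Y ×ₗ ℕ))) : Prop :=
  List.Pairwise (BiLE (bpar parX)) w' ∧
  w'.length = w.length ∧
  ∀ (x : X) (a : ℕ) (y : Y) (bb : ℕ),
    (toLex (x, a), toLex (y, bb)) ∈ w' ↔
      ∃ m, 1 ≤ m ∧ m ≤ countPair w x y ∧ a = lcount parY w x y + m ∧
        bb = (if parY y = false then rcount parX w x y + m
              else rcount parX w x y + countPair w x y + 1 - m)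

/-!
The biletters of `w•` are pairwise distinct, so as a multiset `w•` is the finite set of its
biletters; since an ordered biword is determined by its multiset of biletters (the order `⊴` is
antisymmetric), it suffices to show that swapping the entries of the biletters of `w•` gives the
biletters of `(w^inv)•`. Passing from `w` to `w^inv` preserves multiplicities and exchanges the two
partial counts `ℓ_{i,1} + ⋯ + ℓ_{i,j-1}` and `ℓ_{1,j} + ⋯ + ℓ_{i-1,j}`, so the superscripts
match: with the same `m` when both letters are even, with `m ↦ ℓ + 1 - m` when both are odd, and
for letters of mixed parity restrictedness gives `ℓ ≤ 1`, where the two conventions agree.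
-/

lemma _root_.List.natCard_get_eq_countP {α : Type*} (l : List α) (P : α → Prop)
    [DecidablePred P] :
    Nat.card {i : Fin l.length // P (l.get i)} = l.countP (fun a => decide (P a)) := by
  rw [Nat.card_eq_fintype_card, Fintype.card_subtype, Fin.univ_def, List.countP_eq_length_filter]
  conv_rhs => rw [← List.map_get_finRange l, List.filter_map]
  simp [Finset.filter, Function.comp_def]

lemma _root_.List.Perm.natCard_get_eq {α β : Type*} {l : List α} {l' : List β} {f : α → β}
    (h : l'.Perm (l.map f)) (P : β → Prop) :
    Nat.card {i : Fin l'.length // P (l'.get i)} =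
      Nat.card {i : Fin l.length // P (f (l.get i))} := by
  classical
  rw [List.natCard_get_eq_countP, List.natCard_get_eq_countP l (fun a => P (f a)), h.countP_eq,
    List.countP_map]
  rfl

lemma superPrec_asymm [LinearOrder X] {par : X → Bool} {a b : X}
    (h : SuperPrec par a b) : ¬ SuperPrec par b a := by
  unfold SuperPrec at *
  grind

lemma biLE_antisymm [LinearOrder X] [LinearOrder Y] {parX : X → Bool} {p q : X × Y}
    (h : BiLE parX p q) (h' : BiLE parX q p) : p = q := by
  unfold BiLE at *
  have := @superPrec_asymm _ _ parX p.1 q.1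
  grind

lemma countPair_eq_count [DecidableEq (X × Y)] (w : List (X × Y)) (x : X) (y : Y) :
    countPair w x y = w.count (x, y) := by
  rw [countPair, List.natCard_get_eq_countP w (· = (x, y)), List.count]
  exact List.countP_congr fun q _ => by simp [beq_iff_eq]

section Standardization

variable [LinearOrder X] [LinearOrder Y] (parX : X → Bool) (parY : Y → Bool) (w : List (X × Y))

noncomputable def stdElem (p : X × Y) (m : ℕ) : (X ×ₗ ℕ) × (Y ×ₗ ℕ) :=
  (toLex (p.1, lcount parY w p.1 p.2 + m),
   toLex (p.2, if parY p.2 = false then rcount parX w p.1 p.2 + m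
     else rcount parX w p.1 p.2 + countPair w p.1 p.2 + 1 - m))

noncomputable def stdFinset : Finset ((X ×ₗ ℕ) × (Y ×ₗ ℕ)) :=
  w.toFinset.biUnion fun p => (Finset.Icc 1 (countPair w p.1 p.2)).image (stdElem parX parY w p)

variable {parX parY w}

lemma stdElem_eq_iff {p : X × Y} {m : ℕ} {x : X} {a : ℕ} {y : Y} {bb : ℕ} :
    stdElem parX parY w p m = (toLex (x, a), toLex (y, bb)) ↔
      p = (x, y) ∧ a = lcount parY w x y + m ∧
        bb = (if parY y = false then rcount parX w x y + m
              else rcount parX w x y + countPair w x y + 1 - m) := by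
  simp only [stdElem, Prod.ext_iff, toLex_inj]
  grind

lemma stdElem_injective (p : X × Y) : (stdElem parX parY w p).Injective := by
  intro m m' h
  have := congrArg (fun e => (ofLex e.1).2) h
  simp only [stdElem, ofLex_toLex] at this
  omega

lemma mem_stdFinset {x : X} {a : ℕ} {y : Y} {bb : ℕ} :
    (toLex (x, a), toLex (y, bb)) ∈ stdFinset parX parY w ↔
      ∃ m, 1 ≤ m ∧ m ≤ countPair w x y ∧ a = lcount parY w x y + m ∧
        bb = (if parY y = false then rcount parX w x y + m
              else rcount parX w x y + countPair w x y + 1 - m) := by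
  simp only [stdFinset, Finset.mem_biUnion, Finset.mem_image, Finset.mem_Icc,
    List.mem_toFinset, stdElem_eq_iff]
  constructor
  · rintro ⟨p, -, m, hm, rfl, ha, hb⟩
    exact ⟨m, hm.1, hm.2, ha, hb⟩
  · rintro ⟨m, hm1, hm2, ha, hb⟩
    refine ⟨(x, y), ?_, m, ⟨hm1, hm2⟩, rfl, ha, hb⟩
    obtain ⟨⟨i, hi⟩⟩ := (Nat.card_pos_iff.mp (hm1.trans hm2)).1
    exact hi ▸ List.get_mem w i

lemma card_stdFinset : (stdFinset parX parY w).card = w.length := by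
  rw [stdFinset, Finset.card_biUnion, ← List.sum_toFinset_count_eq_length]
  · refine Finset.sum_congr rfl fun p _ => ?_
    rw [Finset.card_image_of_injective _ (stdElem_injective p), Nat.card_Icc, countPair_eq_count,
      Nat.add_sub_cancel]
  · intro p _ p' _ hne
    simp only [Function.onFun, Finset.disjoint_left, Finset.mem_image]
    rintro _ ⟨m, -, rfl⟩ ⟨m', -, h⟩
    exact hne (stdElem_eq_iff.mp h).1.symm

lemma IsBulletBiword.coe_eq_stdFinset {u : List ((X ×ₗ ℕ) × (Y ×ₗ ℕ))}
    (hu : IsBulletBiword parX parY w u) : (u : Multiset _) = (stdFinset parX parY w).val := by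
  have hset : u.toFinset = stdFinset parX parY w := by
    ext ⟨⟨x, a⟩, ⟨y, bb⟩⟩
    exact (List.mem_toFinset.trans (hu.2.2 x a y bb)).trans mem_stdFinset.symm
  have hnodup : u.Nodup := by
    rw [← Multiset.coe_nodup, ← Multiset.toFinset_card_eq_card_iff_nodup]
    change u.toFinset.card = u.length
    rw [hset, card_stdFinset, hu.2.1]
  rw [← hset, List.toFinset_val, hnodup.dedup]

end Standardization

lemma exists_swapped_index (pa pb : Bool) {L R ℓ a b m : ℕ} (hmix : pa ≠ pb → ℓ ≤ 1)
    (h1 : 1 ≤ m) (h2 : m ≤ ℓ) (ha : a = L + m)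
    (hb : b = if pb = false then R + m else R + ℓ + 1 - m) :
    ∃ m', 1 ≤ m' ∧ m' ≤ ℓ ∧ b = R + m' ∧
      a = if pa = false then L + m' else L + ℓ + 1 - m' := by
  refine ⟨if pa = false then m else ℓ + 1 - m, ?_, ?_, ?_, ?_⟩ <;>
    cases pa <;> cases pb <;> simp at hmix hb ⊢ <;> omega

lemma map_swap_stdFinset [LinearOrder X] [LinearOrder Y] {parX : X → Bool} {parY : Y → Bool}
    {w : List (X × Y)} {w' : List (Y × X)} (hres : Restricted parX parY w)
    (hperm : w'.Perm (w.map Prod.swap)) :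
    (stdFinset parX parY w).map (Equiv.prodComm _ _).toEmbedding = stdFinset parY parX w' := by
  have hcount (x : X) (y : Y) : countPair w' y x = countPair w x y :=
    (hperm.natCard_get_eq (· = (y, x))).trans (by simp only [Prod.swap_eq_iff_eq_swap]; rfl)
  have hl (x : X) (y : Y) : lcount parX w' y x = rcount parX w x y :=
    hperm.natCard_get_eq fun q => q.1 = y ∧ SuperPrec parX q.2 x
  have hr (x : X) (y : Y) : rcount parY w' y x = lcount parY w x y :=
    hperm.natCard_get_eq fun q => q.2 = x ∧ SuperPrec parY q.1 y
  have hmix (x : X) (y : Y) (h : parX x ≠ parY y) : countPair w x y ≤ 1 :=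
    hres (x, y) (by simpa using h)
  ext ⟨⟨y, b⟩, ⟨x, a⟩⟩
  rw [Finset.mem_map_equiv]
  change (toLex (x, a), toLex (y, b)) ∈ _ ↔ (toLex (y, b), toLex (x, a)) ∈ _
  rw [mem_stdFinset, mem_stdFinset, hcount, hl, hr]
  constructor
  · rintro ⟨m, hm1, hm2, ha, hb⟩
    exact exists_swapped_index _ _ (hmix x y) hm1 hm2 ha hb
  · rintro ⟨m, hm1, hm2, hb, ha⟩
    exact exists_swapped_index _ _ (fun h => hmix x y h.symm) hm1 hm2 hb ha

theorem stmt18_general [LinearOrder X] [LinearOrder Y] (parX : X → Bool) (parY : Y → Bool)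
    (w : List (X × Y)) (w' : List (Y × X))
    (hres : Restricted parX parY w)
    (hinv : IsInversion parY w w')
    (u : List ((X ×ₗ ℕ) × (Y ×ₗ ℕ))) (hu : IsBulletBiword parX parY w u)
    (v : List ((Y ×ₗ ℕ) × (X ×ₗ ℕ))) (hv : IsBulletBiword parY parX w' v)
    (uinv : List ((Y ×ₗ ℕ) × (X ×ₗ ℕ))) (huinv : IsInversion (bpar parY) u uinv) :
    uinv = v := by
  have hmultiset : (uinv : Multiset ((Y ×ₗ ℕ) × (X ×ₗ ℕ))) = v := by
    rw [huinv.2, hv.coe_eq_stdFinset, ← map_swap_stdFinset hres (Multiset.coe_eq_coe.mp hinv.2),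
      Finset.map_val, ← Multiset.map_coe, hu.coe_eq_stdFinset]
    rfl
  exact (Multiset.coe_eq_coe.mp hmultiset).eq_of_pairwise (fun _ _ _ _ => biLE_antisymm)
    huinv.1 hv.1

/-- Standardization commutes with inversion:
`(w•)^inv = (w^inv)•` for every ordered restricted biword `w`. -/
theorem stmt18 [LinearOrder X] [LinearOrder Y] (parX : X → Bool) (parY : Y → Bool)
    (w : List (X × Y)) (w' : List (Y × X))
    (hord : List.Pairwise (BiLE parX) w) (hres : Restricted parX parY w)
    (hinv : IsInversion parY w w')
    (u : List ((X ×ₗ ℕ) × (Y ×ₗ ℕ))) (hu : IsBulletBiword parX parY w u)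
    (v : List ((Y ×ₗ ℕ) × (X ×ₗ ℕ))) (hv : IsBulletBiword parY parX w' v)
    (uinv : List ((Y ×ₗ ℕ) × (X ×ₗ ℕ))) (huinv : IsInversion (bpar parY) u uinv) :
    uinv = v :=
  stmt18_general parX parY w w' hres hinv u hu v hv uinv huinv

end SuperRSK
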